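/- arXiv:math/0511387 — 6 statements merged into one kernel-verified Lean document; each statement's English description precedes it below -/
import Mathlib

section
/- For the bent helicoid immersion F(z) = Re(c(z) - i ∫₀^z n(w) × c'(w) dw) with c(t) = (cos t, sin t, 0) and n(t) = cos(at)(-c(t)) + sin(at)(0,0,1), and a ≠ 1, the explicit formula holds: F(z) = Re(cos z - i(a cos z cos(az) - a + sin z sin(az))/(a²-1), sin z - i(a cos(az) sin z - cos z sin(az))/(a²-1), i sin(az)/a), where c and n are extended holomorphically to ℂ. -/
open Complex intervalIntegral

/-- The circle `c(z) = (cos z, sin z, 0)`, extended holomorphically to `ℂ`. -/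
noncomputable def circC (z : ℂ) : Fin 3 → ℂ := ![Complex.cos z, Complex.sin z, 0]

/-- Its derivative `c'(z) = (-sin z, cos z, 0)`. -/
noncomputable def circC' (z : ℂ) : Fin 3 → ℂ := ![-Complex.sin z, Complex.cos z, 0]

/-- The spinning normal `n(z) = cos(az)(-c(z)) + sin(az)(0,0,1)`. -/
noncomputable def spinN (a : ℝ) (z : ℂ) : Fin 3 → ℂ :=
  Complex.cos ((a : ℂ) * z) • ![-Complex.cos z, -Complex.sin z, 0]
    + Complex.sin ((a : ℂ) * z) • ![(0 : ℂ), 0, 1]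

/-- The Björling surface `F(z) = Re (c(z) - i ∫₀ᶻ n(w) × c'(w) dw)`,
with the integral taken along the straight segment from `0` to `z`. -/
noncomputable def bjorlingF (a : ℝ) (z : ℂ) : Fin 3 → ℝ :=
  fun i => ((circC z - Complex.I •
    ∫ t in (0:ℝ)..1, z • crossProduct (spinN a ((t : ℂ) * z)) (circC' ((t : ℂ) * z))) i).re

/-- The integrand `n(w) × c'(w)`, written out explicitly. -/
noncomputable def gg (a : ℝ) (w : ℂ) : Fin 3 → ℂ :=
  ![-(Complex.cos w * Complex.sin ((a:ℂ)*w)), -(Complex.sin w * Complex.sin ((a:ℂ)*w)),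
    -Complex.cos ((a:ℂ)*w)]

/-- An antiderivative of `gg`. -/
noncomputable def GG (a : ℝ) (w : ℂ) : Fin 3 → ℂ :=
  ![((a:ℂ) * Complex.cos w * Complex.cos ((a:ℂ)*w) - a
      + Complex.sin w * Complex.sin ((a:ℂ)*w)) / ((a:ℂ)^2 - 1),
    ((a:ℂ) * Complex.cos ((a:ℂ)*w) * Complex.sin w
      - Complex.cos w * Complex.sin ((a:ℂ)*w)) / ((a:ℂ)^2 - 1),
    -(Complex.sin ((a:ℂ)*w) / a)]

lemma cross_eq_gg (a : ℝ) (w : ℂ) :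
    crossProduct (spinN a w) (circC' w) = gg a w := by
  funext i
  fin_cases i
  · simp [spinN, circC', cross_apply, gg]; ring
  · simp [spinN, circC', cross_apply, gg]; ring
  · simp [spinN, circC', cross_apply, gg]
    linear_combination (-Complex.cos ((a:ℂ)*w)) * (Complex.sin_sq_add_cos_sq w)

lemma hasDerivAt_GG (a : ℝ) (ha0 : (a:ℂ) ≠ 0) (ha2 : (a:ℂ)^2 - 1 ≠ 0) (w : ℂ) :
    HasDerivAt (GG a) (gg a w) w := by
  have hca : HasDerivAt (fun u : ℂ => Complex.cos ((a:ℂ)*u)) (-Complex.sin ((a:ℂ)*w) * a) w := by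
    simpa using ((hasDerivAt_id' w).const_mul (a:ℂ)).ccos
  have hsa : HasDerivAt (fun u : ℂ => Complex.sin ((a:ℂ)*u)) (Complex.cos ((a:ℂ)*w) * a) w := by
    simpa using ((hasDerivAt_id' w).const_mul (a:ℂ)).csin
  have hc := Complex.hasDerivAt_cos w
  have hs := Complex.hasDerivAt_sin w
  refine hasDerivAt_pi.2 fun i => ?_
  fin_cases i
  · have h := ((((hc.const_mul (a:ℂ)).mul hca).sub_const (a:ℂ)).add (hs.mul hsa)).div_const
      ((a:ℂ)^2 - 1)
    convert h using 1
    · rfl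
    · rfl
    simp [gg]; field_simp; ring
  · have h := (((hca.mul hs).const_mul (a:ℂ)).sub (hc.mul hsa)).div_const ((a:ℂ)^2 - 1)
    convert h using 1
    · rfl
    · funext u; simp [GG]; ring_nf
    · simp [gg]; field_simp; ring
  · have h := (hsa.div_const (a:ℂ)).neg
    convert h using 1
    · rfl
    simp [gg]; field_simp

theorem stmt0 (a : ℝ) (ha : 0 < a) (ha1 : a ≠ 1) (z : ℂ) :
    bjorlingF a z = fun i =>
      (![Complex.cos z - Complex.I * (((a : ℂ) * Complex.cos z * Complex.cos ((a : ℂ) * z)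
            - (a : ℂ) + Complex.sin z * Complex.sin ((a : ℂ) * z)) / ((a : ℂ) ^ 2 - 1)),
         Complex.sin z - Complex.I * (((a : ℂ) * Complex.cos ((a : ℂ) * z) * Complex.sin z
            - Complex.cos z * Complex.sin ((a : ℂ) * z)) / ((a : ℂ) ^ 2 - 1)),
         Complex.I * Complex.sin ((a : ℂ) * z) / (a : ℂ)] i).re := by
  have ha0 : (a:ℂ) ≠ 0 := by exact_mod_cast ne_of_gt ha
  have ha2 : (a:ℂ)^2 - 1 ≠ 0 := by
    have h : a^2 - 1 ≠ 0 := by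
      intro h
      have h2 : (a-1)*(a+1) = 0 := by ring_nf; linarith
      rcases mul_eq_zero.1 h2 with h3 | h3
      · exact ha1 (by linarith)
      · linarith
    intro h'
    apply h
    have : ((a^2 - 1 : ℝ) : ℂ) = 0 := by push_cast; exact h'
    exact_mod_cast this
  have key : (∫ t in (0:ℝ)..1, z • crossProduct (spinN a ((t:ℂ)*z)) (circC' ((t:ℂ)*z)))
      = GG a z := by
    have hder : ∀ t ∈ Set.uIcc (0:ℝ) 1,
        HasDerivAt (fun t : ℝ => GG a ((t:ℂ)*z)) (z • gg a ((t:ℂ)*z)) t := by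
      intro t _
      have hmz : HasDerivAt (fun t : ℝ => (t:ℂ)*z) z t :=
        HasDerivAt.comp_ofReal (hasDerivAt_mul_const z)
      exact (hasDerivAt_GG a ha0 ha2 ((t:ℂ)*z)).scomp t hmz
    have hcont : Continuous (fun t : ℝ => z • gg a ((t:ℂ)*z)) := by
      apply continuous_pi; intro i
      fin_cases i <;> simp [gg] <;> fun_prop
    simp only [cross_eq_gg]
    rw [intervalIntegral.integral_eq_sub_of_hasDerivAt hder (hcont.intervalIntegrable 0 1)]
    have hGG0 : GG a 0 = 0 := by funext i; fin_cases i <;> simp [GG]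
    simp [hGG0]
  funext i
  simp only [bjorlingF, key]
  fin_cases i
  · simp [circC, GG]
  · simp [circC, GG]
  · simp only [circC, GG]
    norm_num
    ring
end

section
/- For a > 1 and t_k = (2k+1)π/(2a) with k ∈ ℤ, the vertical coordinate line x = t_k is mapped by the bent helicoid F to the straight line through the origin in direction (cos t_k, sin t_k, 0): for all t ∈ ℝ, F(t_k + ti) = λ(t)·(cos t_k, sin t_k, 0) where λ(t) = ((-1)^k cosh(at) sinh(t) + cosh(t)(a² - (-1)^k a sinh(at) - 1))/(a² - 1). -/
open Complex

/-- The bent helicoid with parameter `a`, given by its explicit formula. -/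
noncomputable def bentFexp (a : ℝ) (z : ℂ) : Fin 3 → ℝ := fun i =>
  (![Complex.cos z - Complex.I * (((a : ℂ) * Complex.cos z * Complex.cos ((a : ℂ) * z)
        - (a : ℂ) + Complex.sin z * Complex.sin ((a : ℂ) * z)) / ((a : ℂ) ^ 2 - 1)),
     Complex.sin z - Complex.I * (((a : ℂ) * Complex.cos ((a : ℂ) * z) * Complex.sin z
        - Complex.cos z * Complex.sin ((a : ℂ) * z)) / ((a : ℂ) ^ 2 - 1)),
     Complex.I * Complex.sin ((a : ℂ) * z) / (a : ℂ)] i).re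

/-- The vertical coordinate line `x = t_k`, `t_k = (2k+1)π/(2a)`, is mapped to the straight
line through the origin in direction `(cos t_k, sin t_k, 0)`. -/
theorem stmt5 (a : ℝ) (ha : 1 < a) (k : ℤ) (tk : ℝ) (htk : tk = (2 * k + 1) * Real.pi / (2 * a))
    (t : ℝ) :
    bentFexp a ((tk : ℂ) + (t : ℂ) * Complex.I) =
      fun i => ((((-1 : ℝ) ^ k * Real.cosh (a * t) * Real.sinh t
          + Real.cosh t * (a ^ 2 - (-1 : ℝ) ^ k * a * Real.sinh (a * t) - 1)) / (a ^ 2 - 1))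
        * ![Real.cos tk, Real.sin tk, 0] i) := by
  have ha0 : a ≠ 0 := by positivity
  have ha2 : a ^ 2 - 1 ≠ 0 := by nlinarith
  have hatk : a * tk = Real.pi / 2 + (k : ℝ) * Real.pi := by
    rw [htk]; field_simp; ring
  have hcos0 : Real.cos (a * tk) = 0 := by
    rw [hatk, Real.cos_add_int_mul_pi, Real.cos_pi_div_two, mul_zero]
  have hsin0 : Real.sin (a * tk) = (-1 : ℝ) ^ k := by
    rw [hatk, Real.sin_add_int_mul_pi, Real.sin_pi_div_two, mul_one]
  have hz : (a : ℂ) * ((tk : ℂ) + (t : ℂ) * I) = ((a * tk : ℝ) : ℂ) + ((a * t : ℝ) : ℂ) * I := by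
    push_cast; ring
  have hcosA : Complex.cos ((a : ℂ) * ((tk : ℂ) + (t : ℂ) * I)) =
      -(((-1 : ℝ) ^ k * Real.sinh (a * t) : ℝ) : ℂ) * I := by
    rw [hz, Complex.cos_add, Complex.cos_mul_I, Complex.sin_mul_I, ← Complex.ofReal_cos,
      ← Complex.ofReal_sin, ← Complex.ofReal_cosh, ← Complex.ofReal_sinh, hcos0, hsin0]
    push_cast; ring
  have hsinA : Complex.sin ((a : ℂ) * ((tk : ℂ) + (t : ℂ) * I)) =
      (((-1 : ℝ) ^ k * Real.cosh (a * t) : ℝ) : ℂ) := by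
    rw [hz, Complex.sin_add, Complex.cos_mul_I, Complex.sin_mul_I, ← Complex.ofReal_cos,
      ← Complex.ofReal_sin, ← Complex.ofReal_cosh, ← Complex.ofReal_sinh, hcos0, hsin0]
    push_cast; ring
  have hcosZ : Complex.cos ((tk : ℂ) + (t : ℂ) * I) =
      ((Real.cos tk * Real.cosh t : ℝ) : ℂ) - ((Real.sin tk * Real.sinh t : ℝ) : ℂ) * I := by
    rw [Complex.cos_add, Complex.cos_mul_I, Complex.sin_mul_I, ← Complex.ofReal_cos,
      ← Complex.ofReal_sin, ← Complex.ofReal_cosh, ← Complex.ofReal_sinh]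
    push_cast; ring
  have hsinZ : Complex.sin ((tk : ℂ) + (t : ℂ) * I) =
      ((Real.sin tk * Real.cosh t : ℝ) : ℂ) + ((Real.cos tk * Real.sinh t : ℝ) : ℂ) * I := by
    rw [Complex.sin_add, Complex.cos_mul_I, Complex.sin_mul_I, ← Complex.ofReal_cos,
      ← Complex.ofReal_sin, ← Complex.ofReal_cosh, ← Complex.ofReal_sinh]
    push_cast; ring
  have hc1 : ((-1 : ℂ) ^ k).re = (-1 : ℝ) ^ k := by
    rw [show ((-1 : ℂ) ^ k) = (((-1 : ℝ) ^ k : ℝ) : ℂ) by push_cast; ring]; exact Complex.ofReal_re _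
  have hc2 : ((-1 : ℂ) ^ k).im = 0 := by
    rw [show ((-1 : ℂ) ^ k) = (((-1 : ℝ) ^ k : ℝ) : ℂ) by push_cast; ring]; exact Complex.ofReal_im _
  obtain ⟨r, hr⟩ : ∃ r : ℝ, a ^ 2 - 1 = r := ⟨_, rfl⟩
  have hrne : r ≠ 0 := hr ▸ ha2
  have hden : ((a : ℂ) ^ 2 - 1) = ((r : ℝ) : ℂ) := by rw [← hr]; push_cast; ring
  rw [show ((((-1 : ℝ) ^ k * Real.cosh (a * t) * Real.sinh t
          + Real.cosh t * (a ^ 2 - (-1 : ℝ) ^ k * a * Real.sinh (a * t) - 1)) / (a ^ 2 - 1)))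
      = (((-1 : ℝ) ^ k * Real.cosh (a * t) * Real.sinh t
          + Real.cosh t * (a ^ 2 - (-1 : ℝ) ^ k * a * Real.sinh (a * t) - 1)) / r) from by
    rw [hr]]
  funext i
  fin_cases i <;>
    simp [bentFexp, hcosA, hsinA, hcosZ, hsinZ, hden, Complex.div_ofReal_re,
      Complex.div_ofReal_im, hc1, hc2, -Complex.ofReal_cos, -Complex.ofReal_sin, -Complex.ofReal_cosh,
      -Complex.ofReal_sinh] <;>
  · subst hr
    field_simp
    ring
end

section
/- As T → ∞, e^{-(a+1)T} F(x + Ti) converges to (1/(4(a+1)))·(-sin((a+1)x), cos((a+1)x), 0) for every fixed x ∈ ℝ. -/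
open Complex Filter

noncomputable def bH1 (a x : ℝ) (p q : ℂ) : ℂ :=
  (Complex.exp ((x:ℂ)*I)*p^2*q + Complex.exp (-(x:ℂ)*I)*q)/2 -
  I*(((a:ℂ)*((Complex.exp ((x:ℂ)*I)*Complex.exp ((a:ℂ)*x*I)*p^2*q^2
      + Complex.exp ((x:ℂ)*I)*Complex.exp (-((a:ℂ)*x)*I)*p^2
      + Complex.exp (-(x:ℂ)*I)*Complex.exp ((a:ℂ)*x*I)*q^2
      + Complex.exp (-(x:ℂ)*I)*Complex.exp (-((a:ℂ)*x)*I))/4)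
    - (a:ℂ)*p*q
    + I^2*(Complex.exp (-(x:ℂ)*I)*Complex.exp (-((a:ℂ)*x)*I)
      - Complex.exp (-(x:ℂ)*I)*Complex.exp ((a:ℂ)*x*I)*q^2
      - Complex.exp ((x:ℂ)*I)*Complex.exp (-((a:ℂ)*x)*I)*p^2
      + Complex.exp ((x:ℂ)*I)*Complex.exp ((a:ℂ)*x*I)*p^2*q^2)/4)/((a:ℂ)^2-1))

noncomputable def bH2 (a x : ℝ) (p q : ℂ) : ℂ :=
  (Complex.exp (-(x:ℂ)*I)*q - Complex.exp ((x:ℂ)*I)*p^2*q)*I/2 -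
  I*(((a:ℂ)*(I*(Complex.exp (-(x:ℂ)*I)*Complex.exp ((a:ℂ)*x*I)*q^2
      + Complex.exp (-(x:ℂ)*I)*Complex.exp (-((a:ℂ)*x)*I)
      - Complex.exp ((x:ℂ)*I)*Complex.exp ((a:ℂ)*x*I)*p^2*q^2
      - Complex.exp ((x:ℂ)*I)*Complex.exp (-((a:ℂ)*x)*I)*p^2)/4)
    - I*(Complex.exp ((x:ℂ)*I)*Complex.exp (-((a:ℂ)*x)*I)*p^2
      + Complex.exp (-(x:ℂ)*I)*Complex.exp (-((a:ℂ)*x)*I)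
      - Complex.exp ((x:ℂ)*I)*Complex.exp ((a:ℂ)*x*I)*p^2*q^2
      - Complex.exp (-(x:ℂ)*I)*Complex.exp ((a:ℂ)*x*I)*q^2)/4)/((a:ℂ)^2-1))

noncomputable def bH3 (a x : ℝ) (p q : ℂ) : ℂ :=
  I*((Complex.exp (-((a:ℂ)*x)*I)*p - Complex.exp ((a:ℂ)*x*I)*p*q^2)*I/2)/(a:ℂ)

set_option maxHeartbeats 1000000 in
lemma bH_eq (a x : ℝ) (T : ℝ) :
    (((Real.exp (-(a+1)*T) : ℝ) : ℂ) *
      (Complex.cos ((x:ℂ)+(T:ℂ)*I) - Complex.I * (((a : ℂ) * Complex.cos ((x:ℂ)+(T:ℂ)*I) * Complex.cos ((a : ℂ) * ((x:ℂ)+(T:ℂ)*I))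
        - (a : ℂ) + Complex.sin ((x:ℂ)+(T:ℂ)*I) * Complex.sin ((a : ℂ) * ((x:ℂ)+(T:ℂ)*I))) / ((a : ℂ) ^ 2 - 1)))
    = bH1 a x ((Real.exp (-T) : ℝ) : ℂ) ((Real.exp (-(a*T)) : ℝ) : ℂ))
    ∧ (((Real.exp (-(a+1)*T) : ℝ) : ℂ) *
      (Complex.sin ((x:ℂ)+(T:ℂ)*I) - Complex.I * (((a : ℂ) * Complex.cos ((a : ℂ) * ((x:ℂ)+(T:ℂ)*I)) * Complex.sin ((x:ℂ)+(T:ℂ)*I)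
        - Complex.cos ((x:ℂ)+(T:ℂ)*I) * Complex.sin ((a : ℂ) * ((x:ℂ)+(T:ℂ)*I))) / ((a : ℂ) ^ 2 - 1)))
    = bH2 a x ((Real.exp (-T) : ℝ) : ℂ) ((Real.exp (-(a*T)) : ℝ) : ℂ))
    ∧ (((Real.exp (-(a+1)*T) : ℝ) : ℂ) *
      (Complex.I * Complex.sin ((a : ℂ) * ((x:ℂ)+(T:ℂ)*I)) / (a : ℂ))
    = bH3 a x ((Real.exp (-T) : ℝ) : ℂ) ((Real.exp (-(a*T)) : ℝ) : ℂ)) := by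
  have h1 : ((Real.exp (-T) : ℝ):ℂ) ≠ 0 := by exact_mod_cast Real.exp_ne_zero (-T)
  have h2 : ((Real.exp (-(a*T)) : ℝ):ℂ) ≠ 0 := by exact_mod_cast Real.exp_ne_zero (-(a*T))
  have hE1 : Complex.exp (((x:ℂ)+(T:ℂ)*I) * I) = Complex.exp ((x:ℂ)*I) * ↑(Real.exp (-T)) := by
    have h : ((x:ℂ)+(T:ℂ)*I)*I = (x:ℂ)*I + ((-T : ℝ) : ℂ) := by
      push_cast; linear_combination (T:ℂ) * Complex.I_sq
    rw [h, Complex.exp_add, ← Complex.ofReal_exp]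
  have hE2 : Complex.exp (-((x:ℂ)+(T:ℂ)*I) * I) = Complex.exp (-(x:ℂ)*I) * (↑(Real.exp (-T)))⁻¹ := by
    have h : -((x:ℂ)+(T:ℂ)*I)*I = -(x:ℂ)*I + ((T : ℝ) : ℂ) := by
      push_cast; linear_combination -(T:ℂ) * Complex.I_sq
    rw [h, Complex.exp_add, show ((T:ℝ):ℂ) = ((-(-T) : ℝ):ℂ) by norm_num, ← Complex.ofReal_exp,
      Real.exp_neg]
    push_cast; ring
  have hE3 : Complex.exp ((a:ℂ)*((x:ℂ)+(T:ℂ)*I) * I) = Complex.exp ((a:ℂ)*x*I) * ↑(Real.exp (-(a*T))) := by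
    have h : (a:ℂ)*((x:ℂ)+(T:ℂ)*I)*I = (a:ℂ)*x*I + ((-(a*T) : ℝ) : ℂ) := by
      push_cast; linear_combination (a:ℂ)*(T:ℂ) * Complex.I_sq
    rw [h, Complex.exp_add, ← Complex.ofReal_exp]
  have hE4 : Complex.exp (-((a:ℂ)*((x:ℂ)+(T:ℂ)*I)) * I) = Complex.exp (-((a:ℂ)*x)*I) * (↑(Real.exp (-(a*T))))⁻¹ := by
    have h : -((a:ℂ)*((x:ℂ)+(T:ℂ)*I))*I = -((a:ℂ)*x)*I + (((a*T) : ℝ) : ℂ) := by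
      push_cast; linear_combination -(a:ℂ)*(T:ℂ) * Complex.I_sq
    rw [h, Complex.exp_add, show ((a*T:ℝ):ℂ) = ((-(-(a*T)) : ℝ):ℂ) by norm_num, ← Complex.ofReal_exp,
      Real.exp_neg]
    push_cast; ring
  have hsmul : ((Real.exp (-(a+1)*T) : ℝ) : ℂ) = ↑(Real.exp (-T)) * ↑(Real.exp (-(a*T))) := by
    rw [← Complex.ofReal_mul, ← Real.exp_add]; norm_num; ring_nf
  have hc : ((Real.exp (-(a+1)*T) : ℝ):ℂ) * Complex.cos ((x:ℂ)+(T:ℂ)*I)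
      = (Complex.exp ((x:ℂ)*I)*(↑(Real.exp (-T)):ℂ)^2*↑(Real.exp (-(a*T))) + Complex.exp (-(x:ℂ)*I)*↑(Real.exp (-(a*T))))/2 := by
    rw [Complex.cos, hE1, hE2, hsmul]; field_simp
  have hcc : ((Real.exp (-(a+1)*T) : ℝ):ℂ) * (Complex.cos ((x:ℂ)+(T:ℂ)*I) * Complex.cos ((a:ℂ)*((x:ℂ)+(T:ℂ)*I)))
      = (Complex.exp ((x:ℂ)*I)*Complex.exp ((a:ℂ)*x*I)*(↑(Real.exp (-T)):ℂ)^2*(↑(Real.exp (-(a*T))):ℂ)^2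
      + Complex.exp ((x:ℂ)*I)*Complex.exp (-((a:ℂ)*x)*I)*(↑(Real.exp (-T)):ℂ)^2
      + Complex.exp (-(x:ℂ)*I)*Complex.exp ((a:ℂ)*x*I)*(↑(Real.exp (-(a*T))):ℂ)^2
      + Complex.exp (-(x:ℂ)*I)*Complex.exp (-((a:ℂ)*x)*I))/4 := by
    rw [Complex.cos, Complex.cos, hE1, hE2, hE3, hE4, hsmul]; field_simp; ring
  have hss : ((Real.exp (-(a+1)*T) : ℝ):ℂ) * (Complex.sin ((x:ℂ)+(T:ℂ)*I) * Complex.sin ((a:ℂ)*((x:ℂ)+(T:ℂ)*I)))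
      = I^2*(Complex.exp (-(x:ℂ)*I)*Complex.exp (-((a:ℂ)*x)*I)
      - Complex.exp (-(x:ℂ)*I)*Complex.exp ((a:ℂ)*x*I)*(↑(Real.exp (-(a*T))):ℂ)^2
      - Complex.exp ((x:ℂ)*I)*Complex.exp (-((a:ℂ)*x)*I)*(↑(Real.exp (-T)):ℂ)^2
      + Complex.exp ((x:ℂ)*I)*Complex.exp ((a:ℂ)*x*I)*(↑(Real.exp (-T)):ℂ)^2*(↑(Real.exp (-(a*T))):ℂ)^2)/4 := by
    rw [Complex.sin, Complex.sin, hE1, hE2, hE3, hE4, hsmul]; field_simp; ring_nf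
  have hsin : ((Real.exp (-(a+1)*T) : ℝ):ℂ) * Complex.sin ((x:ℂ)+(T:ℂ)*I)
      = (Complex.exp (-(x:ℂ)*I)*↑(Real.exp (-(a*T))) - Complex.exp ((x:ℂ)*I)*(↑(Real.exp (-T)):ℂ)^2*↑(Real.exp (-(a*T))))*I/2 := by
    rw [Complex.sin, hE1, hE2, hsmul]; field_simp
  have hcs : ((Real.exp (-(a+1)*T) : ℝ):ℂ) * (Complex.cos ((a:ℂ)*((x:ℂ)+(T:ℂ)*I)) * Complex.sin ((x:ℂ)+(T:ℂ)*I))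
      = I*(Complex.exp (-(x:ℂ)*I)*Complex.exp ((a:ℂ)*x*I)*(↑(Real.exp (-(a*T))):ℂ)^2
      + Complex.exp (-(x:ℂ)*I)*Complex.exp (-((a:ℂ)*x)*I)
      - Complex.exp ((x:ℂ)*I)*Complex.exp ((a:ℂ)*x*I)*(↑(Real.exp (-T)):ℂ)^2*(↑(Real.exp (-(a*T))):ℂ)^2
      - Complex.exp ((x:ℂ)*I)*Complex.exp (-((a:ℂ)*x)*I)*(↑(Real.exp (-T)):ℂ)^2)/4 := by
    rw [Complex.cos, Complex.sin, hE1, hE2, hE3, hE4, hsmul]; field_simp; ring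
  have hzs : ((Real.exp (-(a+1)*T) : ℝ):ℂ) * (Complex.cos ((x:ℂ)+(T:ℂ)*I) * Complex.sin ((a:ℂ)*((x:ℂ)+(T:ℂ)*I)))
      = I*(Complex.exp ((x:ℂ)*I)*Complex.exp (-((a:ℂ)*x)*I)*(↑(Real.exp (-T)):ℂ)^2
      + Complex.exp (-(x:ℂ)*I)*Complex.exp (-((a:ℂ)*x)*I)
      - Complex.exp ((x:ℂ)*I)*Complex.exp ((a:ℂ)*x*I)*(↑(Real.exp (-T)):ℂ)^2*(↑(Real.exp (-(a*T))):ℂ)^2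
      - Complex.exp (-(x:ℂ)*I)*Complex.exp ((a:ℂ)*x*I)*(↑(Real.exp (-(a*T))):ℂ)^2)/4 := by
    rw [Complex.cos, Complex.sin, hE1, hE2, hE3, hE4, hsmul]; field_simp; ring
  have hsa : ((Real.exp (-(a+1)*T) : ℝ):ℂ) * Complex.sin ((a:ℂ)*((x:ℂ)+(T:ℂ)*I))
      = (Complex.exp (-((a:ℂ)*x)*I)*↑(Real.exp (-T)) - Complex.exp ((a:ℂ)*x*I)*↑(Real.exp (-T))*(↑(Real.exp (-(a*T))):ℂ)^2)*I/2 := by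
    rw [Complex.sin, hE3, hE4, hsmul]; field_simp
  refine ⟨?_, ?_, ?_⟩
  · have expand : ((Real.exp (-(a+1)*T) : ℝ) : ℂ) *
        (Complex.cos ((x:ℂ)+(T:ℂ)*I) - Complex.I * (((a : ℂ) * Complex.cos ((x:ℂ)+(T:ℂ)*I) * Complex.cos ((a : ℂ) * ((x:ℂ)+(T:ℂ)*I))
          - (a : ℂ) + Complex.sin ((x:ℂ)+(T:ℂ)*I) * Complex.sin ((a : ℂ) * ((x:ℂ)+(T:ℂ)*I))) / ((a : ℂ) ^ 2 - 1)))
        = ((Real.exp (-(a+1)*T) : ℝ):ℂ) * Complex.cos ((x:ℂ)+(T:ℂ)*I)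
          - I * (((a:ℂ) * (((Real.exp (-(a+1)*T) : ℝ):ℂ) * (Complex.cos ((x:ℂ)+(T:ℂ)*I) * Complex.cos ((a:ℂ)*((x:ℂ)+(T:ℂ)*I))))
            - ((Real.exp (-(a+1)*T) : ℝ):ℂ) * (a:ℂ)
            + ((Real.exp (-(a+1)*T) : ℝ):ℂ) * (Complex.sin ((x:ℂ)+(T:ℂ)*I) * Complex.sin ((a:ℂ)*((x:ℂ)+(T:ℂ)*I)))) / ((a:ℂ)^2-1)) := by
      ring
    rw [expand, hc, hcc, hss]
    rw [show ((Real.exp (-(a+1)*T) : ℝ):ℂ) * (a:ℂ) = (a:ℂ) * (↑(Real.exp (-T)) * ↑(Real.exp (-(a*T)))) by rw [hsmul]; ring]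
    simp only [bH1]; ring
  · have expand : ((Real.exp (-(a+1)*T) : ℝ) : ℂ) *
        (Complex.sin ((x:ℂ)+(T:ℂ)*I) - Complex.I * (((a : ℂ) * Complex.cos ((a : ℂ) * ((x:ℂ)+(T:ℂ)*I)) * Complex.sin ((x:ℂ)+(T:ℂ)*I)
          - Complex.cos ((x:ℂ)+(T:ℂ)*I) * Complex.sin ((a : ℂ) * ((x:ℂ)+(T:ℂ)*I))) / ((a : ℂ) ^ 2 - 1)))
        = ((Real.exp (-(a+1)*T) : ℝ):ℂ) * Complex.sin ((x:ℂ)+(T:ℂ)*I)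
          - I * (((a:ℂ) * (((Real.exp (-(a+1)*T) : ℝ):ℂ) * (Complex.cos ((a:ℂ)*((x:ℂ)+(T:ℂ)*I)) * Complex.sin ((x:ℂ)+(T:ℂ)*I)))
            - ((Real.exp (-(a+1)*T) : ℝ):ℂ) * (Complex.cos ((x:ℂ)+(T:ℂ)*I) * Complex.sin ((a:ℂ)*((x:ℂ)+(T:ℂ)*I)))) / ((a:ℂ)^2-1)) := by
      ring
    rw [expand, hsin, hcs, hzs]
    simp only [bH2]
  · have expand : ((Real.exp (-(a+1)*T) : ℝ) : ℂ) *
        (Complex.I * Complex.sin ((a : ℂ) * ((x:ℂ)+(T:ℂ)*I)) / (a : ℂ))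
        = I * (((Real.exp (-(a+1)*T) : ℝ):ℂ) * Complex.sin ((a:ℂ)*((x:ℂ)+(T:ℂ)*I))) / (a:ℂ) := by
      ring
    rw [expand, hsa]
    simp only [bH3]

lemma hBD_val (a x : ℝ) : Complex.exp (-(x:ℂ)*I) * Complex.exp (-((a:ℂ)*x)*I)
    = ↑(Real.cos ((a+1)*x)) - ↑(Real.sin ((a+1)*x)) * I := by
  rw [← Complex.exp_add]
  have h : -(x:ℂ)*I + -((a:ℂ)*x)*I = ((-((a+1)*x) : ℝ):ℂ) * I := by push_cast; ring
  rw [h, Complex.exp_mul_I, ← Complex.ofReal_cos, ← Complex.ofReal_sin, Real.cos_neg, Real.sin_neg]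
  push_cast; ring

lemma bH1_val (a x : ℝ) (ha : 1 < a) : bH1 a x 0 0
    = ↑(1/(4*(a+1)) * -Real.sin ((a+1)*x)) + ↑(-(1/(4*(a+1))) * Real.cos ((a+1)*x)) * I := by
  have ha2 : ((a:ℂ)^2 - 1) ≠ 0 := by
    have h : a^2 - 1 ≠ 0 := by nlinarith
    exact_mod_cast fun hc => h (by exact_mod_cast hc : a^2 - 1 = 0)
  have ha1 : ((a:ℂ) + 1) ≠ 0 := by
    have h : a + 1 ≠ 0 := by nlinarith
    exact_mod_cast fun hc => h (by exact_mod_cast hc : a + 1 = 0)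
  simp only [bH1]
  rw [hBD_val a x]
  push_cast
  field_simp
  ring_nf
  simp [Complex.I_sq]
  ring_nf

lemma bH2_val (a x : ℝ) (ha : 1 < a) : bH2 a x 0 0
    = ↑(1/(4*(a+1)) * Real.cos ((a+1)*x)) + ↑(-(1/(4*(a+1))) * Real.sin ((a+1)*x)) * I := by
  have ha2 : ((a:ℂ)^2 - 1) ≠ 0 := by
    have h : a^2 - 1 ≠ 0 := by nlinarith
    exact_mod_cast fun hc => h (by exact_mod_cast hc : a^2 - 1 = 0)
  have ha1 : ((a:ℂ) + 1) ≠ 0 := by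
    have h : a + 1 ≠ 0 := by nlinarith
    exact_mod_cast fun hc => h (by exact_mod_cast hc : a + 1 = 0)
  simp only [bH2]
  rw [hBD_val a x]
  push_cast
  field_simp
  ring_nf
  linear_combination ((2*Complex.sin ((a:ℂ)*(x:ℂ)+(x:ℂ))*I - 2*Complex.cos ((a:ℂ)*(x:ℂ)+(x:ℂ)))*((a:ℂ)^2-1)) * Complex.I_sq

lemma bH3_val (a x : ℝ) : bH3 a x 0 0 = 0 := by
  simp [bH3]

/-- As `T → ∞`, `e^{-(a+1)T} F(x + Ti) → (1/(4(a+1)))(-sin((a+1)x), cos((a+1)x), 0)`. -/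
theorem stmt7 (a : ℝ) (ha : 1 < a) (x : ℝ) :
    Tendsto (fun T : ℝ => Real.exp (-(a + 1) * T) • bentFexp a ((x : ℂ) + (T : ℂ) * Complex.I))
      atTop (nhds ((1 / (4 * (a + 1))) •
        ![-Real.sin ((a + 1) * x), Real.cos ((a + 1) * x), 0])) := by
  have hp0 : Tendsto (fun T : ℝ => ((Real.exp (-T) : ℝ) : ℂ)) atTop (nhds 0) := by
    have h := Real.tendsto_exp_neg_atTop_nhds_zero
    simpa only [Function.comp_def, Complex.ofReal_zero] using
      (Complex.continuous_ofReal.tendsto 0).comp h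
  have hq0 : Tendsto (fun T : ℝ => ((Real.exp (-(a*T)) : ℝ) : ℂ)) atTop (nhds 0) := by
    have h0 : Tendsto (fun T : ℝ => a*T) atTop atTop :=
      Tendsto.const_mul_atTop (by linarith) tendsto_id
    have h := Real.tendsto_exp_neg_atTop_nhds_zero.comp h0
    simpa only [Function.comp_def, Complex.ofReal_zero] using
      (Complex.continuous_ofReal.tendsto 0).comp h
  have key : ∀ (bH : ℝ → ℝ → ℂ → ℂ → ℂ), Continuous (fun pq : ℂ × ℂ => bH a x pq.1 pq.2) →
      Tendsto (fun T : ℝ => bH a x ↑(Real.exp (-T)) ↑(Real.exp (-(a*T)))) atTop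
        (nhds (bH a x 0 0)) := by
    intro bH hc
    exact (hc.tendsto ((0 : ℂ), (0 : ℂ))).comp (hp0.prodMk_nhds hq0)
  have kc1 : Continuous (fun pq : ℂ × ℂ => bH1 a x pq.1 pq.2) := by unfold bH1; fun_prop
  have kc2 : Continuous (fun pq : ℂ × ℂ => bH2 a x pq.1 pq.2) := by unfold bH2; fun_prop
  have kc3 : Continuous (fun pq : ℂ × ℂ => bH3 a x pq.1 pq.2) := by unfold bH3; fun_prop
  have hre1 : (bH1 a x 0 0).re = 1/(4*(a+1)) * -Real.sin ((a+1)*x) := by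
    rw [bH1_val a x ha]
    simp only [Complex.add_re, Complex.mul_re, Complex.ofReal_re, Complex.ofReal_im,
      Complex.I_re, Complex.I_im]
    ring
  have hre2 : (bH2 a x 0 0).re = 1/(4*(a+1)) * Real.cos ((a+1)*x) := by
    rw [bH2_val a x ha]
    simp only [Complex.add_re, Complex.mul_re, Complex.ofReal_re, Complex.ofReal_im,
      Complex.I_re, Complex.I_im]
    ring
  have hre3 : (bH3 a x 0 0).re = 1/(4*(a+1)) * 0 := by
    rw [bH3_val a x, Complex.zero_re]; ring
  rw [tendsto_pi_nhds]
  intro i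
  fin_cases i <;>
    simp only [bentFexp, Pi.smul_apply, smul_eq_mul, Matrix.cons_val_zero, Matrix.cons_val_one,
      Matrix.head_cons, Fin.isValue, Matrix.cons_val_two, Matrix.tail_cons, Fin.mk_zero,
      Fin.mk_one]
  · have t1 := ((key bH1 kc1).congr (fun T => ((bH_eq a x T).1).symm))
    have r1 := (Complex.continuous_re.tendsto _).comp t1
    simp only [Function.comp_def, Complex.re_ofReal_mul] at r1
    rw [hre1] at r1
    exact r1
  · have t2 := ((key bH2 kc2).congr (fun T => ((bH_eq a x T).2.1).symm))
    have r2 := (Complex.continuous_re.tendsto _).comp t2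
    simp only [Function.comp_def, Complex.re_ofReal_mul] at r2
    rw [hre2] at r2
    exact r2
  · have t3 := ((key bH3 kc3).congr (fun T => ((bH_eq a x T).2.2).symm))
    have r3 := (Complex.continuous_re.tendsto _).comp t3
    simp only [Function.comp_def, Complex.re_ofReal_mul] at r3
    rw [hre3] at r3
    exact r3
end

section
/- The difference of the y-derivatives of the ruled approximation R and the bent helicoid F satisfies the norm identity |∂/∂y (R(x,y) - F(x,y))|² = 4 cos²(ax) cosh(ay) sinh²(y/2)(cosh(y)cosh(ay) - sin(ax)sinh(y)). -/
/-- The squared Euclidean norm of `∂/∂y (R(x,y) - F(x,y))` equals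
`4 cos²(ax) cosh(ay) sinh²(y/2) (cosh y cosh(ay) - sin(ax) sinh y)`. -/
theorem stmt11 (a : ℝ) (ha : 1 < a) (x y : ℝ) :
    (Real.cos (a * x) * Real.sinh y
        * (Real.sin x * Real.sinh (a * y) - Real.cos x * Real.cos (a * x))) ^ 2
      + (-(Real.cos (a * x) * Real.sinh y
        * (Real.cos (a * x) * Real.sin x + Real.cos x * Real.sinh (a * y)))) ^ 2
      + (-(Real.cos (a * x) * ((Real.cosh y - 1) * Real.cosh (a * y)
        - Real.sin (a * x) * Real.sinh y))) ^ 2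
    = 4 * Real.cos (a * x) ^ 2 * Real.cosh (a * y) * Real.sinh (y / 2) ^ 2
        * (Real.cosh y * Real.cosh (a * y) - Real.sin (a * x) * Real.sinh y) := by
  have h1 : Real.sin x ^ 2 + Real.cos x ^ 2 = 1 := Real.sin_sq_add_cos_sq x
  have h5 : Real.sin (a * x) ^ 2 + Real.cos (a * x) ^ 2 = 1 := Real.sin_sq_add_cos_sq (a * x)
  have h2 : Real.cosh y ^ 2 - Real.sinh y ^ 2 = 1 := Real.cosh_sq_sub_sinh_sq y
  have h3 : Real.cosh (a * y) ^ 2 - Real.sinh (a * y) ^ 2 = 1 :=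
    Real.cosh_sq_sub_sinh_sq (a * y)
  have h4 : Real.cosh y - 1 = 2 * Real.sinh (y / 2) ^ 2 := by
    have := Real.cosh_sq (y / 2)
    have hc := Real.cosh_two_mul (y / 2)
    rw [show 2 * (y / 2) = y by ring] at hc
    linarith
  set B := Real.cos (a * x)
  set A := Real.sin (a * x)
  set u := Real.sinh y
  set v := Real.cosh y
  set p := Real.sinh (a * y)
  set q := Real.cosh (a * y)
  linear_combination (B^2 * u^2 * (p^2 + B^2)) * h1 + (B^2 * u^2) * h5
    + (-(B^2 * u^2)) * (by linarith : q^2 - p^2 = 1)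
    + (-(B^2 * q^2)) * (by linarith : v^2 - u^2 = 1)
    + (2 * B^2 * q * (v * q - A * u)) * h4
end

section
/- For a > 1 and d = log(a)/a ≤ 1, the integral bound ∫₀^d cosh(ay) sinh(y) dy = (−cosh(d)cosh(ad) + a sinh(d)sinh(ad) + 1)/(a² − 1) holds, and this quantity is at most d for a sufficiently large. -/
lemma sinh_le_two_mul' {d : ℝ} (h0 : 0 ≤ d) (h1 : d ≤ 1/2) : Real.sinh d ≤ 2 * d := by
  rw [Real.sinh_eq]
  have heq : Real.exp d * Real.exp (-d) = 1 := by rw [← Real.exp_add]; simp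
  have h2 : 1 - d ≤ Real.exp (-d) := by
    have := Real.add_one_le_exp (-d); linarith
  nlinarith [Real.exp_pos d, Real.exp_pos (-d),
    mul_nonneg (sub_nonneg.2 h2) (Real.exp_pos d).le]

/-- (i) For `a ≥ 3` and `d = log a / a`,
`∫₀^d cosh(ay) sinh y dy = (-cosh d cosh(ad) + a sinh d sinh(ad) + 1)/(a² - 1)`;
(ii) for `a` sufficiently large this quantity is at most `d`. -/
theorem stmt13 :
    (∀ a : ℝ, 3 ≤ a →
      (∫ y in (0:ℝ)..(Real.log a / a), Real.cosh (a * y) * Real.sinh y)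
        = (-Real.cosh (Real.log a / a) * Real.cosh (a * (Real.log a / a))
            + a * Real.sinh (Real.log a / a) * Real.sinh (a * (Real.log a / a)) + 1)
          / (a ^ 2 - 1))
    ∧ (∃ a₀ : ℝ, ∀ a : ℝ, a₀ ≤ a →
      (-Real.cosh (Real.log a / a) * Real.cosh (a * (Real.log a / a))
          + a * Real.sinh (Real.log a / a) * Real.sinh (a * (Real.log a / a)) + 1)
        / (a ^ 2 - 1) ≤ Real.log a / a) := by
  constructor
  · intro a ha
    have hc : a ^ 2 - 1 ≠ 0 := by nlinarith
    set d := Real.log a / a with hd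
    have key : ∀ y ∈ Set.uIcc (0:ℝ) d,
        HasDerivAt (fun y => (a * Real.sinh (a*y) * Real.sinh y
            - Real.cosh (a*y) * Real.cosh y) / (a ^ 2 - 1))
          (Real.cosh (a * y) * Real.sinh y) y := by
      intro y _
      have h1 : HasDerivAt (fun y : ℝ => a * y) a y := by
        simpa using (hasDerivAt_id y).const_mul a
      have hs : HasDerivAt (fun y => Real.sinh (a*y)) (Real.cosh (a*y) * a) y :=
        (Real.hasDerivAt_sinh (a*y)).comp y h1
      have hco : HasDerivAt (fun y => Real.cosh (a*y)) (Real.sinh (a*y) * a) y :=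
        (Real.hasDerivAt_cosh (a*y)).comp y h1
      have H : HasDerivAt (fun y => (a * Real.sinh (a*y) * Real.sinh y
            - Real.cosh (a*y) * Real.cosh y) / (a ^ 2 - 1))
          (((a * (Real.cosh (a*y) * a)) * Real.sinh y + (a * Real.sinh (a*y)) * Real.cosh y
            - ((Real.sinh (a*y) * a) * Real.cosh y + Real.cosh (a*y) * Real.sinh y))
            / (a ^ 2 - 1)) y :=
        ((((hs.const_mul a).mul (Real.hasDerivAt_sinh y)).sub
          (hco.mul (Real.hasDerivAt_cosh y))).div_const _)
      convert H using 1
      field_simp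
      ring
    rw [intervalIntegral.integral_eq_sub_of_hasDerivAt key
      (((Real.continuous_cosh.comp (continuous_const.mul continuous_id)).mul
        Real.continuous_sinh).intervalIntegrable _ _)]
    simp only [mul_zero, Real.sinh_zero, Real.cosh_zero]
    field_simp
    ring
  · refine ⟨16, fun a ha => ?_⟩
    have ha0 : (0:ℝ) < a := by linarith
    have hL : 0 < Real.log a := Real.log_pos (by linarith)
    have hs4 : (4:ℝ) ≤ Real.sqrt a := by
      rw [show (4:ℝ) = Real.sqrt 16 by
        rw [show (16:ℝ) = 4^2 by norm_num, Real.sqrt_sq]; norm_num]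
      exact Real.sqrt_le_sqrt ha
    have hsq : Real.sqrt a ^ 2 = a := Real.sq_sqrt ha0.le
    have hlog : Real.log a ≤ a / 2 := by
      have h1 : Real.log (Real.sqrt a) ≤ Real.sqrt a - 1 :=
        Real.log_le_sub_one_of_pos (by positivity)
      have h2 : Real.log (Real.sqrt a) = Real.log a / 2 := Real.log_sqrt ha0.le
      nlinarith
    have hd0 : 0 < Real.log a / a := by positivity
    have hd2 : Real.log a / a ≤ 1/2 := by
      rw [div_le_iff₀ ha0]; linarith
    have had : a * (Real.log a / a) = Real.log a := by field_simp
    rw [had, Real.sinh_log ha0, Real.cosh_log ha0,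
      div_le_iff₀ (by nlinarith : (0:ℝ) < a ^ 2 - 1)]
    have hsinh := sinh_le_two_mul' hd0.le hd2
    have hcosh := Real.one_le_cosh (Real.log a / a)
    have hinv : a * a⁻¹ = 1 := mul_inv_cancel₀ ha0.ne'
    have hinv0 : 0 < a⁻¹ := by positivity
    nlinarith [mul_nonneg (sub_nonneg.2 hsinh) (by nlinarith : (0:ℝ) ≤ a * (a - a⁻¹)),
      mul_nonneg (sub_nonneg.2 hcosh) (by positivity : (0:ℝ) ≤ a + a⁻¹)]
end

section
/- Suppose c, c̃ : ℂ → ℂ³ and n₁, n₂, ñ₁, ñ₂ are holomorphic with |c(w) − c̃(w)| ≤ C|w|², |nⱼ(w) − ñⱼ(w)| ≤ C|w|², |nⱼ'(w) − ñⱼ'(w)| ≤ C|w|, |nⱼ''(w) − ñⱼ''(w)| ≤ C for j = 1,2 on a domain containing the rectangle |Re z| ≤ π/a, |Im z| ≤ log(a)/a. Then the Björling surfaces F, F̃ built with spinning normals n(t) = cos(at)n₁ + sin(at)n₂ (and similarly ñ) satisfy |F̃(z) − F(z)| ≤ K·C·(log a)²/a² for all such z, for a sufficiently large and an absolute constant K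 (e.g. K = 6), using c' × n₁ = n₂ and c' × n₂ = −n₁. -/
open Complex

/-- Euclidean norm on `ℂ³`. -/
noncomputable def enormC (v : Fin 3 → ℂ) : ℝ := Real.sqrt (∑ i, ‖v i‖ ^ 2)

/-- Euclidean norm on `ℝ³`. -/
noncomputable def enormR (v : Fin 3 → ℝ) : ℝ := Real.sqrt (∑ i, (v i) ^ 2)

/-- The Björling surface with core curve `c` and spinning normal
`n(t) = cos(at) n₁(t) + sin(at) n₂(t)`, using `n × c' = cos(at) n₂ - sin(at) n₁`:
`F(z) = Re (c(z) - i ∫₀ᶻ (cos(aw) n₂(w) - sin(aw) n₁(w)) dw)`,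
the integral taken along the segment from `0` to `z`. -/
noncomputable def bjorlingSpin (a : ℝ) (c n₁ n₂ : ℂ → Fin 3 → ℂ) (z : ℂ) : Fin 3 → ℝ :=
  fun i => ((c z - Complex.I • ∫ t in (0:ℝ)..1,
    z • (Complex.cos ((a : ℂ) * ((t : ℂ) * z)) • n₂ ((t : ℂ) * z)
        - Complex.sin ((a : ℂ) * ((t : ℂ) * z)) • n₁ ((t : ℂ) * z))) i).re

lemma enormC_eq (v : Fin 3 → ℂ) :
    enormC v = ‖(((EuclideanSpace.equiv (Fin 3) ℂ).symm : (Fin 3 → ℂ) →L[ℂ] EuclideanSpace ℂ (Fin 3))) v‖ := by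
  rw [EuclideanSpace.norm_eq]
  simp [enormC]

lemma enormC_add_le (u v : Fin 3 → ℂ) : enormC (u + v) ≤ enormC u + enormC v := by
  simp only [enormC_eq, map_add]; exact norm_add_le _ _

lemma enormC_sub_le (u v : Fin 3 → ℂ) : enormC (u - v) ≤ enormC u + enormC v := by
  simp only [enormC_eq, map_sub]; exact norm_sub_le _ _

lemma enormC_smul (α : ℂ) (v : Fin 3 → ℂ) : enormC (α • v) = ‖α‖ * enormC v := by
  simp only [enormC_eq, map_smul]
  rw [norm_smul]

lemma enormC_neg (v : Fin 3 → ℂ) : enormC (-v) = enormC v := by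
  simp only [enormC_eq, map_neg, norm_neg]

lemma enormR_re_le (v : Fin 3 → ℂ) : enormR (fun i => (v i).re) ≤ enormC v := by
  unfold enormR enormC
  apply Real.sqrt_le_sqrt
  apply Finset.sum_le_sum
  intro i _
  calc (v i).re ^ 2 = |(v i).re| ^ 2 := (_root_.sq_abs _).symm
    _ ≤ ‖v i‖ ^ 2 :=
        pow_le_pow_left₀ (abs_nonneg _) (Complex.abs_re_le_norm _) 2

lemma abs_cos_le' (w : ℂ) : ‖Complex.cos w‖ ≤ Real.exp |w.im| := by
  unfold Complex.cos
  calc ‖(Complex.exp (w * I) + Complex.exp (-w * I)) / 2‖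
      ≤ (‖Complex.exp (w * I)‖ + ‖Complex.exp (-w * I)‖) / 2 := by
        rw [norm_div]; simp only [Complex.norm_ofNat]
        gcongr
        exact norm_add_le _ _
    _ ≤ (Real.exp |w.im| + Real.exp |w.im|) / 2 := by
        rw [Complex.norm_exp, Complex.norm_exp]
        gcongr <;> simp [Complex.mul_re] <;>
          [exact neg_abs_le _ |>.trans_eq (by ring) ; skip] <;>
          nlinarith [neg_abs_le w.im, le_abs_self w.im]
    _ = Real.exp |w.im| := by ring

lemma abs_sin_le' (w : ℂ) : ‖Complex.sin w‖ ≤ Real.exp |w.im| := by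
  unfold Complex.sin
  calc ‖(Complex.exp (-w * I) - Complex.exp (w * I)) * I / 2‖
      ≤ (‖Complex.exp (-w * I)‖ + ‖Complex.exp (w * I)‖) / 2 := by
        rw [norm_div, norm_mul]; simp only [Complex.norm_I, mul_one, Complex.norm_ofNat]
        gcongr
        exact (norm_sub_le _ _)
    _ ≤ (Real.exp |w.im| + Real.exp |w.im|) / 2 := by
        rw [Complex.norm_exp, Complex.norm_exp]
        gcongr <;> simp [Complex.mul_re] <;>
          nlinarith [neg_abs_le w.im, le_abs_self w.im]
    _ = Real.exp |w.im| := by ring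

lemma exp_integral_bound {s L : ℝ} (hs0 : 0 ≤ s) (hsL : s ≤ L) (hL : 100 ≤ L) :
    ∫ t in (0:ℝ)..1, Real.exp (s * t) ≤ 2 * Real.exp L / L := by
  have hL0 : (0:ℝ) < L := by linarith
  have hLexp : L + 1 ≤ Real.exp L := Real.add_one_le_exp L
  have h2L : 2 * L ≤ Real.exp L := by
    have h := Real.add_one_le_exp (L / 2)
    have h2 : Real.exp L = Real.exp (L / 2) * Real.exp (L / 2) := by
      rw [← Real.exp_add]; ring_nf
    nlinarith
  rcases eq_or_lt_of_le hs0 with h0 | hs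
  · simp only [← h0, zero_mul, Real.exp_zero, intervalIntegral.integral_const, smul_eq_mul,
      sub_zero, mul_one]
    rw [le_div_iff₀ hL0]
    linarith
  · have hval : (∫ t in (0:ℝ)..1, Real.exp (s * t)) = (Real.exp s - 1) / s := by
      rw [intervalIntegral.integral_comp_mul_left Real.exp (ne_of_gt hs)]
      rw [mul_zero, mul_one, integral_exp, Real.exp_zero, smul_eq_mul]
      ring
    rw [hval, div_le_div_iff₀ hs hL0]
    have hes1 : 1 ≤ Real.exp s := Real.one_le_exp hs0
    rcases le_or_gt s 1 with hs1 | hs1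
    · -- exp s - 1 ≤ s * exp s ≤ s * 3, and 3 * L ≤ 2 * exp L
      have hkey : Real.exp s * (1 - s) ≤ 1 := by
        have h := Real.add_one_le_exp (-s)
        have h2 : Real.exp (-s) * Real.exp s = 1 := by
          rw [← Real.exp_add]; simp
        nlinarith [Real.exp_pos s]
      have hes3 : Real.exp s ≤ 3 := by
        calc Real.exp s ≤ Real.exp 1 := Real.exp_le_exp.2 hs1
          _ ≤ 3 := by nlinarith [Real.exp_one_lt_d9]
      have f1 : Real.exp s - 1 ≤ 3 * s := by nlinarith
      nlinarith [mul_le_mul_of_nonneg_right f1 hL0.le,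
        mul_le_mul_of_nonneg_left (show 3 * L ≤ 2 * Real.exp L by linarith) hs0]
    · -- s ≥ 1 : exp s / s ≤ exp L / L
      have hE : Real.exp (L - s) * Real.exp s = Real.exp L := by
        rw [← Real.exp_add]; ring_nf
      have hE1 : L - s + 1 ≤ Real.exp (L - s) := Real.add_one_le_exp _
      have hss : (s - 1) * (L - s) ≥ 0 :=
        mul_nonneg (by linarith) (by linarith)
      nlinarith [Real.exp_pos s, Real.exp_pos (L - s), mul_le_mul_of_nonneg_left hE1 (le_of_lt (mul_pos (lt_of_lt_of_le zero_lt_one hs1.le) (Real.exp_pos s)))]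

lemma enormC_nonneg (v : Fin 3 → ℂ) : 0 ≤ enormC v := by unfold enormC; exact Real.sqrt_nonneg _

set_option maxHeartbeats 2000000 in
/-- Comparison of Björling surfaces of curves that agree to second order at the origin:
for sufficiently large `a`, on the rectangle `|Re z| ≤ π/a`, `|Im z| ≤ log a / a`,
the two bent helicoids are `6C (log a)²/a²`-close. -/
theorem stmt16 (C : ℝ) (hC : 0 < C) (U : Set ℂ) (hU : IsOpen U) (h0 : (0 : ℂ) ∈ U)
    (hstar : ∀ z ∈ U, ∀ t : ℝ, t ∈ Set.Icc (0:ℝ) 1 → (t : ℂ) * z ∈ U)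
    (c c' n₁ n₂ : ℂ → Fin 3 → ℂ) (ct ct' m₁ m₂ : ℂ → Fin 3 → ℂ)
    (hc : DifferentiableOn ℂ c U) (hct : DifferentiableOn ℂ ct U)
    (hn₁ : DifferentiableOn ℂ n₁ U) (hn₂ : DifferentiableOn ℂ n₂ U)
    (hm₁ : DifferentiableOn ℂ m₁ U) (hm₂ : DifferentiableOn ℂ m₂ U)
    (hc' : ∀ z ∈ U, HasDerivAt c (c' z) z) (hct' : ∀ z ∈ U, HasDerivAt ct (ct' z) z)
    (hframe₁ : ∀ w ∈ U, crossProduct (c' w) (n₁ w) = n₂ w)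
    (hframe₂ : ∀ w ∈ U, crossProduct (c' w) (n₂ w) = -n₁ w)
    (hframe₁' : ∀ w ∈ U, crossProduct (ct' w) (m₁ w) = m₂ w)
    (hframe₂' : ∀ w ∈ U, crossProduct (ct' w) (m₂ w) = -m₁ w)
    (hclose : ∀ w ∈ U, enormC (c w - ct w) ≤ C * ‖w‖ ^ 2)
    (hclose₁ : ∀ w ∈ U, enormC (n₁ w - m₁ w) ≤ C * ‖w‖ ^ 2)
    (hclose₂ : ∀ w ∈ U, enormC (n₂ w - m₂ w) ≤ C * ‖w‖ ^ 2)
    (hclose₁' : ∀ w ∈ U, enormC (deriv n₁ w - deriv m₁ w) ≤ C * ‖w‖)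
    (hclose₂' : ∀ w ∈ U, enormC (deriv n₂ w - deriv m₂ w) ≤ C * ‖w‖)
    (hclose₁'' : ∀ w ∈ U, enormC (deriv (deriv n₁) w - deriv (deriv m₁) w) ≤ C)
    (hclose₂'' : ∀ w ∈ U, enormC (deriv (deriv n₂) w - deriv (deriv m₂) w) ≤ C) :
    ∃ a₀ : ℝ, 3 ≤ a₀ ∧ ∀ a : ℝ, a₀ ≤ a → ∀ z : ℂ, z ∈ U →
      |z.re| ≤ Real.pi / a → |z.im| ≤ Real.log a / a →
      enormR (bjorlingSpin a ct m₁ m₂ z - bjorlingSpin a c n₁ n₂ z)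
        ≤ 6 * C * (Real.log a) ^ 2 / a ^ 2 := by
  refine ⟨Real.exp 100, ?_, ?_⟩
  · nlinarith [Real.add_one_le_exp (100:ℝ)]
  intro a ha z hzU hre him
  have ha0 : (0:ℝ) < a := lt_of_lt_of_le (Real.exp_pos 100) ha
  set L := Real.log a with hLdef
  have hL : 100 ≤ L := (Real.le_log_iff_exp_le ha0).2 ha
  have hL0 : (0:ℝ) < L := by linarith
  have haL : Real.exp L = a := Real.exp_log ha0
  set r := ‖z‖ with hrdef
  have hr0 : (0:ℝ) ≤ r := norm_nonneg z
  have hr : r ≤ (4 + L) / a := by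
    calc r ≤ |z.re| + |z.im| := Complex.norm_le_abs_re_add_abs_im z
      _ ≤ Real.pi / a + L / a := add_le_add hre him
      _ ≤ 4 / a + L / a := by gcongr; linarith [Real.pi_le_four]
      _ = (4 + L) / a := by ring
  set s := a * |z.im| with hsdef
  have hs0 : (0:ℝ) ≤ s := mul_nonneg ha0.le (abs_nonneg _)
  have hsL : s ≤ L := by
    calc s ≤ a * (L / a) := mul_le_mul_of_nonneg_left him ha0.le
      _ = L := by field_simp
  -- integrands
  set Ft : ℝ → (Fin 3 → ℂ) := fun t =>
    z • (Complex.cos ((a : ℝ) * ((t : ℂ) * z)) • m₂ ((t : ℂ) * z)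
        - Complex.sin ((a : ℂ) * ((t : ℂ) * z)) • m₁ ((t : ℂ) * z)) with hFt_def
  set Fc : ℝ → (Fin 3 → ℂ) := fun t =>
    z • (Complex.cos ((a : ℝ) * ((t : ℂ) * z)) • n₂ ((t : ℂ) * z)
        - Complex.sin ((a : ℂ) * ((t : ℂ) * z)) • n₁ ((t : ℂ) * z)) with hFc_def
  have hmaps : Set.MapsTo (fun t : ℝ => (t:ℂ) * z) (Set.Icc 0 1) U :=
    fun t ht => hstar z hzU t ht
  have hcontmul : Continuous (fun t : ℝ => (t:ℂ) * z) := Complex.continuous_ofReal.mul continuous_const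
  have haux : ∀ (n : ℂ → Fin 3 → ℂ), DifferentiableOn ℂ n U →
      ContinuousOn (fun t : ℝ => n ((t:ℂ)*z)) (Set.Icc 0 1) :=
    fun n hn => (hn.continuousOn).comp hcontmul.continuousOn hmaps
  have hcos : Continuous (fun t : ℝ => Complex.cos ((a:ℝ) * ((t:ℂ)*z))) := Complex.continuous_cos.comp (continuous_const.mul hcontmul)
  have hsin : Continuous (fun t : ℝ => Complex.sin ((a:ℂ) * ((t:ℂ)*z))) := Complex.continuous_sin.comp (continuous_const.mul hcontmul)
  have hFt_int : IntervalIntegrable Ft MeasureTheory.volume 0 1 := by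
    apply ContinuousOn.intervalIntegrable
    rw [Set.uIcc_of_le (zero_le_one)]
    exact (continuousOn_const (c := z)).smul
      (((hcos.continuousOn).smul (haux m₂ hm₂)).sub ((hsin.continuousOn).smul (haux m₁ hm₁)))
  have hFc_int : IntervalIntegrable Fc MeasureTheory.volume 0 1 := by
    apply ContinuousOn.intervalIntegrable
    rw [Set.uIcc_of_le (zero_le_one)]
    exact (continuousOn_const (c := z)).smul
      (((hcos.continuousOn).smul (haux n₂ hn₂)).sub ((hsin.continuousOn).smul (haux n₁ hn₁)))
  have hintEq : (∫ t in (0:ℝ)..1, (Ft t - Fc t))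
      = (∫ t in (0:ℝ)..1, Ft t) - ∫ t in (0:ℝ)..1, Fc t :=
    intervalIntegral.integral_sub hFt_int hFc_int
  have key : bjorlingSpin a ct m₁ m₂ z - bjorlingSpin a c n₁ n₂ z
      = fun i => (((ct z - c z) - Complex.I •
          ((∫ t in (0:ℝ)..1, Ft t) - ∫ t in (0:ℝ)..1, Fc t)) i).re := by
    funext i
    simp only [Pi.sub_apply, bjorlingSpin, hFt_def, hFc_def, Pi.smul_apply, smul_eq_mul,
      Complex.sub_re, Complex.sub_im, Complex.mul_re, Complex.mul_im]
    ring
  rw [key]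
  refine (enormR_re_le _).trans ?_
  set J := (∫ t in (0:ℝ)..1, Ft t) - ∫ t in (0:ℝ)..1, Fc t with hJdef
  have hterm1 : enormC (ct z - c z) ≤ C * r ^ 2 := by
    rw [← enormC_neg, neg_sub]
    exact hclose z hzU
  set G : ℝ → ℝ := fun t => 2 * C * r ^ 3 * Real.exp (s * t) with hGdef
  have hGcont : Continuous G :=
    continuous_const.mul (Real.continuous_exp.comp (continuous_const.mul continuous_id))
  have hGint : IntervalIntegrable G MeasureTheory.volume 0 1 := hGcont.intervalIntegrable _ _
  have hpt : ∀ t ∈ Set.Ioc (0:ℝ) 1, enormC (Ft t - Fc t) ≤ G t := by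
    intro t ht
    obtain ⟨ht0, ht1⟩ := ht
    have htz : (t:ℂ) * z ∈ U := hstar z hzU t ⟨ht0.le, ht1⟩
    have hdiff : Ft t - Fc t = z •
        (Complex.cos ((a:ℂ) * ((t:ℂ) * z)) • (m₂ ((t:ℂ) * z) - n₂ ((t:ℂ) * z))
          - Complex.sin ((a:ℂ) * ((t:ℂ) * z)) • (m₁ ((t:ℂ) * z) - n₁ ((t:ℂ) * z))) := by
      funext i
      simp only [hFt_def, hFc_def, Pi.sub_apply, Pi.smul_apply, smul_eq_mul]
      ring
    rw [hdiff, enormC_smul]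
    have habs_tz : ‖(t:ℂ) * z‖ ≤ r := by
      rw [norm_mul, Complex.norm_real, Real.norm_eq_abs, _root_.abs_of_nonneg ht0.le]
      nlinarith
    have hm2 : enormC (m₂ ((t:ℂ) * z) - n₂ ((t:ℂ) * z)) ≤ C * r ^ 2 := by
      rw [← enormC_neg, neg_sub]
      refine (hclose₂ _ htz).trans ?_
      have := pow_le_pow_left₀ (norm_nonneg _) habs_tz 2
      nlinarith
    have hm1 : enormC (m₁ ((t:ℂ) * z) - n₁ ((t:ℂ) * z)) ≤ C * r ^ 2 := by
      rw [← enormC_neg, neg_sub]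
      refine (hclose₁ _ htz).trans ?_
      have := pow_le_pow_left₀ (norm_nonneg _) habs_tz 2
      nlinarith
    have him_tz : |((a:ℂ) * ((t:ℂ) * z)).im| = s * t := by
      simp only [Complex.mul_im, Complex.mul_re, Complex.ofReal_re, Complex.ofReal_im,
        zero_mul, mul_zero, add_zero, zero_add, sub_zero]
      rw [abs_mul, abs_mul, _root_.abs_of_nonneg ha0.le, _root_.abs_of_nonneg ht0.le]
      ring
    have hcosb : ‖Complex.cos ((a:ℂ) * ((t:ℂ) * z))‖ ≤ Real.exp (s * t) := by
      refine (abs_cos_le' _).trans ?_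
      rw [him_tz]
    have hsinb : ‖Complex.sin ((a:ℂ) * ((t:ℂ) * z))‖ ≤ Real.exp (s * t) := by
      refine (abs_sin_le' _).trans ?_
      rw [him_tz]
    have h2' : ‖Complex.cos ((a:ℂ) * ((t:ℂ) * z))‖
          * enormC (m₂ ((t:ℂ) * z) - n₂ ((t:ℂ) * z)) ≤ Real.exp (s * t) * (C * r ^ 2) :=
      mul_le_mul hcosb hm2 (enormC_nonneg _) (Real.exp_pos _).le
    have h1' : ‖Complex.sin ((a:ℂ) * ((t:ℂ) * z))‖
          * enormC (m₁ ((t:ℂ) * z) - n₁ ((t:ℂ) * z)) ≤ Real.exp (s * t) * (C * r ^ 2) :=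
      mul_le_mul hsinb hm1 (enormC_nonneg _) (Real.exp_pos _).le
    calc ‖z‖ * enormC
          (Complex.cos ((a:ℂ) * ((t:ℂ) * z)) • (m₂ ((t:ℂ) * z) - n₂ ((t:ℂ) * z))
            - Complex.sin ((a:ℂ) * ((t:ℂ) * z)) • (m₁ ((t:ℂ) * z) - n₁ ((t:ℂ) * z)))
        ≤ r * (Real.exp (s * t) * (C * r ^ 2) + Real.exp (s * t) * (C * r ^ 2)) := by
          refine mul_le_mul_of_nonneg_left ?_ hr0
          refine (enormC_sub_le _ _).trans ?_
          rw [enormC_smul, enormC_smul]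
          exact add_le_add h2' h1'
      _ = G t := by rw [hGdef]; ring
  have hJ : enormC J ≤ 2 * C * r ^ 3 * (2 * Real.exp L / L) := by
    rw [hJdef, ← intervalIntegral.integral_sub hFt_int hFc_int, enormC_eq,
      ← ContinuousLinearMap.intervalIntegral_comp_comm _ (hFt_int.sub hFc_int)]
    have hb := intervalIntegral.norm_integral_le_of_norm_le
      (μ := MeasureTheory.volume) (a := (0:ℝ)) (b := 1)
      (f := fun t => (((EuclideanSpace.equiv (Fin 3) ℂ).symm :
        (Fin 3 → ℂ) →L[ℂ] EuclideanSpace ℂ (Fin 3))) (Ft t - Fc t)) (g := G)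
      zero_le_one ?_ hGint
    · refine hb.trans ?_
      have hGnn : (0:ℝ) ≤ 2 * C * r ^ 3 :=
        mul_nonneg (by linarith) (pow_nonneg hr0 3)
      simp only [hGdef]
      rw [intervalIntegral.integral_const_mul]
      refine mul_le_mul_of_nonneg_left ?_ hGnn
      exact exp_integral_bound hs0 hsL hL
    · refine Filter.Eventually.of_forall ?_
      intro t ht
      rw [← enormC_eq]
      exact hpt t ht
  have hpoly : L * (4 + L) ^ 2 + 4 * (4 + L) ^ 3 ≤ 6 * L ^ 3 := by
    nlinarith [mul_le_mul_of_nonneg_right hL hL0.le, sq_nonneg L,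
      mul_le_mul_of_nonneg_right (mul_le_mul_of_nonneg_right hL hL0.le) hL0.le]
  calc enormC ((ct z - c z) - Complex.I • J)
      ≤ enormC (ct z - c z) + enormC (Complex.I • J) := enormC_sub_le _ _
    _ = enormC (ct z - c z) + enormC J := by rw [enormC_smul, Complex.norm_I, one_mul]
    _ ≤ C * r ^ 2 + 2 * C * r ^ 3 * (2 * Real.exp L / L) := add_le_add hterm1 hJ
    _ = C * r ^ 2 + 4 * C * r ^ 3 * a / L := by rw [haL]; ring
    _ ≤ C * ((4 + L) / a) ^ 2 + 4 * C * ((4 + L) / a) ^ 3 * a / L := by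
        have h2 : r ^ 2 ≤ ((4 + L) / a) ^ 2 := pow_le_pow_left₀ hr0 hr 2
        have h3 : r ^ 3 ≤ ((4 + L) / a) ^ 3 := pow_le_pow_left₀ hr0 hr 3
        have hd : 0 ≤ 4 * C * a / L :=
          div_nonneg (by nlinarith) hL0.le
        have e1 : 4 * C * r ^ 3 * a / L = (4 * C * a / L) * r ^ 3 := by ring
        have e2 : 4 * C * ((4 + L) / a) ^ 3 * a / L
            = (4 * C * a / L) * ((4 + L) / a) ^ 3 := by ring
        rw [e1, e2]
        exact add_le_add (mul_le_mul_of_nonneg_left h2 hC.le)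
          (mul_le_mul_of_nonneg_left h3 hd)
    _ = (C * (4 + L) ^ 2 * L + 4 * C * (4 + L) ^ 3) / (L * a ^ 2) := by
        rw [div_pow, div_pow, eq_div_iff (mul_pos hL0 (pow_pos ha0 2)).ne']
        field_simp [ne_of_gt ha0, ne_of_gt hL0]
    _ ≤ (6 * C * L ^ 3) / (L * a ^ 2) := by
        rw [div_le_div_iff_of_pos_right (mul_pos hL0 (pow_pos ha0 2))]
        nlinarith [mul_le_mul_of_nonneg_left hpoly hC.le]
    _ = 6 * C * L ^ 2 / a ^ 2 := by
        rw [div_eq_div_iff (mul_pos hL0 (pow_pos ha0 2)).ne' (pow_pos ha0 2).ne']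
        ring
end
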